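/- (Relaxed sufficient condition.) With the full junction conditions replaced as follows: assume the preliminary conditions hold, assume equation ℓ^α e_a^β [∇_α ξ_β] = f₁ ξ_a + f₂ η_a holds (and its ξ↔η analogue), and assume the jump of the generalized second fundamental form satisfies ξ^d [H_{bd}] = A₁ ξ_b + A₂ η_b and η^d [H_{bd}] = B₁ ξ_b + B₂ η_b for functions A_i, B_i on Σ. Then the jumps of the 4-forms vanish: (η⁺∧ξ⁺∧dξ⁺)|_Σ = (η⁻∧ξ⁻∧dξ⁻)|_Σ and (ξ⁺∧η⁺∧dη⁺)|_Σ = (ξ⁻∧η⁻∧dη⁻)|_Σ. -/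

import Mathlib

/-!
Coordinate (local-chart) formalization of pseudo-Riemannian geometry on `ℝⁿ`:
manifolds are modeled by `Pt n = Fin n → ℝ`, tensor fields by their component
functions, and all differential-geometric operations (Lie derivatives, the
Levi-Civita connection via Christoffel symbols, curvature, pullbacks along
embeddings, exterior derivatives and wedge products) are defined explicitly.
-/

noncomputable section
open scoped BigOperators

abbrev Pt (n : ℕ) : Type := Fin n → ℝ

/-- Partial derivative `∂_a f` of a scalar function. -/
def pd {n : ℕ} (f : Pt n → ℝ) (a : Fin n) (x : Pt n) : ℝ :=
  fderiv ℝ f x (Pi.single a 1)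

/-- Pairing of a covector (components `ω`) with a vector (components `u`). -/
def ip {n : ℕ} (ω u : Fin n → ℝ) : ℝ := ∑ α, ω α * u α

/-- Scalar product of two vectors with respect to the metric `g`. -/
def gdot {n : ℕ} (g : Pt n → Fin n → Fin n → ℝ) (x : Pt n) (u v : Fin n → ℝ) : ℝ :=
  ∑ a, ∑ b, g x a b * u a * v b

/-- Index lowering: the 1-form `ξ_♭` metrically dual to the vector field `ξ`. -/
def flat {n : ℕ} (g : Pt n → Fin n → Fin n → ℝ) (ξ : Pt n → Pt n) (x : Pt n) (b : Fin n) : ℝ :=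
  ∑ c, g x b c * ξ x c

/-- Lie derivative `(ℒ_ξ g)_{ab}` of a symmetric 2-covariant tensor field `g`
along the vector field `ξ`. -/
def lieD {n : ℕ} (g : Pt n → Fin n → Fin n → ℝ) (ξ : Pt n → Pt n) (x : Pt n) (a b : Fin n) : ℝ :=
  ∑ c, (ξ x c * pd (fun y => g y a b) c x
      + g x c b * pd (fun y => ξ y c) a x
      + g x a c * pd (fun y => ξ y c) b x)

/-- Lie bracket `[ξ, η]` of two vector fields. -/
def lieBr {n : ℕ} (ξ η : Pt n → Pt n) (x : Pt n) : Pt n :=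
  fun a => ∑ b, (ξ x b * pd (fun y => η y a) b x - η x b * pd (fun y => ξ y a) b x)

/-- Christoffel symbols `Γ^a_{bc}` of the Levi-Civita connection of `g`
(`ginv` is the inverse metric). -/
def Chr {n : ℕ} (g ginv : Pt n → Fin n → Fin n → ℝ) (a b c : Fin n) (x : Pt n) : ℝ :=
  (1/2) * ∑ d, ginv x a d *
    (pd (fun y => g y d b) c x + pd (fun y => g y d c) b x - pd (fun y => g y b c) d x)

/-- Covariant derivative `∇_a ω_b` of a 1-form `ω`. -/
def covD {n : ℕ} (g ginv : Pt n → Fin n → Fin n → ℝ) (ω : Pt n → Fin n → ℝ)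
    (x : Pt n) (a b : Fin n) : ℝ :=
  pd (fun y => ω y b) a x - ∑ c, Chr g ginv c a b x * ω x c

/-- Covariant derivative `∇_m S_{abcd}` of a 4-covariant tensor field `S`. -/
def covD4 {n : ℕ} (g ginv : Pt n → Fin n → Fin n → ℝ)
    (S : Pt n → Fin n → Fin n → Fin n → Fin n → ℝ) (x : Pt n) (m a b c d : Fin n) : ℝ :=
  pd (fun y => S y a b c d) m x
    - ∑ e, Chr g ginv e m a x * S x e b c d
    - ∑ e, Chr g ginv e m b x * S x a e c d
    - ∑ e, Chr g ginv e m c x * S x a b e d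
    - ∑ e, Chr g ginv e m d x * S x a b c e

/-- Riemann tensor `R^a_{bcd}` of the Levi-Civita connection. -/
def Riem {n : ℕ} (g ginv : Pt n → Fin n → Fin n → ℝ) (a b c d : Fin n) (x : Pt n) : ℝ :=
  pd (fun y => Chr g ginv a d b y) c x - pd (fun y => Chr g ginv a c b y) d x
    + ∑ e, (Chr g ginv a c e x * Chr g ginv e d b x - Chr g ginv a d e x * Chr g ginv e c b x)

/-- Ricci tensor `R_{bd} = R^a_{bad}`. -/
def RicciT {n : ℕ} (g ginv : Pt n → Fin n → Fin n → ℝ) (b d : Fin n) (x : Pt n) : ℝ :=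
  ∑ a, Riem g ginv a b a d x

/-- Normalized antisymmetrization of a 3-index quantity. -/
def asym3 {ι : Type*} (T : ι → ι → ι → ℝ) (a b c : ι) : ℝ :=
  (1/6) * ∑ σ : Equiv.Perm (Fin 3),
    ((Equiv.Perm.sign σ : ℤ) : ℝ) * T (![a, b, c] (σ 0)) (![a, b, c] (σ 1)) (![a, b, c] (σ 2))

/-- Normalized antisymmetrization of a 4-index quantity. -/
def asym4 {ι : Type*} (T : ι → ι → ι → ι → ℝ) (a b c d : ι) : ℝ :=
  (1/24) * ∑ σ : Equiv.Perm (Fin 4),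
    ((Equiv.Perm.sign σ : ℤ) : ℝ) *
      T (![a, b, c, d] (σ 0)) (![a, b, c, d] (σ 1)) (![a, b, c, d] (σ 2)) (![a, b, c, d] (σ 3))

/-- Pullback `Φ* g` of a 2-covariant tensor field along a map `Φ`
(first fundamental form when `Φ` is an embedding and `g` the metric). -/
def pull2 {d m : ℕ} (Φ : Pt d → Pt m) (g : Pt m → Fin m → Fin m → ℝ)
    (p : Pt d) (a b : Fin d) : ℝ :=
  ∑ α, ∑ β, g (Φ p) α β *
    fderiv ℝ Φ p (Pi.single a 1) α * fderiv ℝ Φ p (Pi.single b 1) β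

/-- The tangent frame `e_a = dΦ(∂/∂λ^a)` along the hypersurface `Σ = Φ(σ)`. -/
def eF {d : ℕ} (Φ : Pt d → Pt (d+1)) (a : Fin d) (p : Pt d) : Pt (d+1) :=
  fderiv ℝ Φ p (Pi.single a 1)

/-- Exterior derivative `dω` of a 1-form evaluated on two vectors:
`dω(u,v) = u^α v^β (∂_α ω_β - ∂_β ω_α)`. -/
def dext {n : ℕ} (ω : Pt n → Fin n → ℝ) (x : Pt n) (u v : Fin n → ℝ) : ℝ :=
  ∑ α, ∑ β, u α * v β * (pd (fun y => ω y β) α x - pd (fun y => ω y α) β x)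

/-- Wedge product of two covectors evaluated on two vectors. -/
def wdg2 {n : ℕ} (ω τ : Fin n → ℝ) (u v : Fin n → ℝ) : ℝ :=
  ip ω u * ip τ v - ip ω v * ip τ u

/-- Wedge product of four covectors evaluated on four vectors (determinant convention). -/
def wdg4 {n : ℕ} (ω₁ ω₂ ω₃ ω₄ : Fin n → ℝ) (u : Fin 4 → Fin n → ℝ) : ℝ :=
  ∑ σ : Equiv.Perm (Fin 4), ((Equiv.Perm.sign σ : ℤ) : ℝ) *
    (ip ω₁ (u (σ 0)) * ip ω₂ (u (σ 1)) * ip ω₃ (u (σ 2)) * ip ω₄ (u (σ 3)))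

/-- The 4-form `A_♭ ∧ B_♭ ∧ d(B_♭)` built from two vector fields `A`, `B`
(indices lowered with `g`), evaluated on four vectors. -/
def form4 {n : ℕ} (g : Pt n → Fin n → Fin n → ℝ) (A B : Pt n → Pt n) (x : Pt n)
    (u : Fin 4 → Fin n → ℝ) : ℝ :=
  (1/2) * ∑ σ : Equiv.Perm (Fin 4), ((Equiv.Perm.sign σ : ℤ) : ℝ) *
    (ip (flat g A x) (u (σ 0)) * ip (flat g B x) (u (σ 1)) *
      dext (flat g B) x (u (σ 2)) (u (σ 3)))

/-- Covariant derivative `∇_{e_a} ℓ` of a vector field `ℓ` defined along `Σ = Φ(σ)`. -/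
def covVecS {d : ℕ} (g ginv : Pt (d+1) → Fin (d+1) → Fin (d+1) → ℝ) (Φ : Pt d → Pt (d+1))
    (ℓ : Pt d → Pt (d+1)) (a : Fin d) (p : Pt d) : Pt (d+1) :=
  fun μ => pd (fun q => ℓ q μ) a p + ∑ ν, ∑ ρ, Chr g ginv μ ν ρ (Φ p) * eF Φ a p ν * ℓ p ρ

/-- The lowered components `ℓ_ν` along `Σ` of a vector field `ℓ` defined along `Σ`. -/
def flatS {d : ℕ} (g : Pt (d+1) → Fin (d+1) → Fin (d+1) → ℝ) (Φ : Pt d → Pt (d+1))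
    (ℓ : Pt d → Pt (d+1)) (p : Pt d) (ν : Fin (d+1)) : ℝ :=
  ∑ ρ, g (Φ p) ν ρ * ℓ p ρ

/-- Generalized second fundamental form `H_{ab} = e_a^μ e_b^ν ∇_μ ℓ_ν`
with respect to the rigging `ℓ`. -/
def Hgen {d : ℕ} (g ginv : Pt (d+1) → Fin (d+1) → Fin (d+1) → ℝ) (Φ : Pt d → Pt (d+1))
    (ℓ : Pt d → Pt (d+1)) (a b : Fin d) (p : Pt d) : ℝ :=
  ∑ ν, eF Φ b p ν * (pd (fun q => flatS g Φ ℓ q ν) a p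
    - ∑ c, (∑ μ, eF Φ a p μ * Chr g ginv c μ ν (Φ p)) * flatS g Φ ℓ p c)

/-- Transversal component `B_a = 2 ℓ^α e_a^β ∇_{[α} ω_{β]}` of `dω` along `Σ`. -/
def Bcoef {d : ℕ} (g ginv : Pt (d+1) → Fin (d+1) → Fin (d+1) → ℝ) (Φ : Pt d → Pt (d+1))
    (ℓ : Pt d → Pt (d+1)) (ω : Pt (d+1) → Fin (d+1) → ℝ) (a : Fin d) (p : Pt d) : ℝ :=
  ∑ α, ∑ β, ℓ p α * eF Φ a p β * (covD g ginv ω (Φ p) α β - covD g ginv ω (Φ p) β α)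

/-- Tangential component `A_{ab} = e_{[a}(ω_{b]})` of `dω` along `Σ`. -/
def Acoef {d : ℕ} (Φ : Pt d → Pt (d+1)) (ω : Pt (d+1) → Fin (d+1) → ℝ)
    (a b : Fin d) (p : Pt d) : ℝ :=
  (1/2) * (pd (fun q => ip (ω (Φ q)) (eF Φ b q)) a p - pd (fun q => ip (ω (Φ q)) (eF Φ a q)) b p)

/-- The identified frame `{ℓ, e_a}` along `Σ`, indexed by `Option (Fin d)`. -/
def frameV {d : ℕ} (Φ : Pt d → Pt (d+1)) (ℓ : Pt d → Pt (d+1)) (p : Pt d) :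
    Option (Fin d) → Pt (d+1)
  | none => ℓ p
  | some a => eF Φ a p

abbrev Sm {n m : ℕ} (f : Pt n → Pt m) : Prop := ContDiff ℝ (⊤ : ℕ∞) f

lemma one_le_inf : ((⊤:ℕ∞) : WithTop ℕ∞) ≠ 0 := by simp
lemma inf_add_one : ((⊤:ℕ∞) : WithTop ℕ∞) + 1 ≤ ((⊤:ℕ∞) : WithTop ℕ∞) := by
  exact_mod_cast le_top

lemma pd_congr {n : ℕ} {f g : Pt n → ℝ} (h : ∀ x, f x = g x) (a : Fin n) (x : Pt n) :
    pd f a x = pd g a x := by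
  have : f = g := funext h
  rw [this]

lemma pd_sum {n : ℕ} {ι : Type*} [Fintype ι] {x : Pt n} (f : ι → Pt n → ℝ)
    (h : ∀ i, DifferentiableAt ℝ (f i) x) (a : Fin n) :
    pd (fun y => ∑ i, f i y) a x = ∑ i, pd (f i) a x := by
  unfold pd
  rw [fderiv_fun_sum (fun i _ => h i)]
  simp [ContinuousLinearMap.sum_apply]

lemma pd_mul {n : ℕ} {f g : Pt n → ℝ} {x : Pt n}
    (hf : DifferentiableAt ℝ f x) (hg : DifferentiableAt ℝ g x) (a : Fin n) :
    pd (fun y => f y * g y) a x = pd f a x * g x + f x * pd g a x := by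
  unfold pd
  rw [fderiv_fun_mul hf hg]
  simp [mul_comm]
  ring

lemma fderiv_eval {n : ℕ} {f : Pt n → ℝ} {x : Pt n} (hf : DifferentiableAt ℝ f x)
    (v : Fin n → ℝ) : fderiv ℝ f x v = ∑ β, v β * pd f β x := by
  have hs : ∀ β : Fin n, (fun j => if β = j then (1:ℝ) else 0) = Pi.single β 1 := by
    intro β; funext j; simp [Pi.single_apply, eq_comm]
  have hv : v = ∑ β : Fin n, v β • (Pi.single β 1 : Pt n) := by
    conv_lhs => rw [pi_eq_sum_univ v]
    simp_rw [hs]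
  conv_lhs => rw [hv]
  rw [map_sum]
  simp [pd, mul_comm]

lemma pd_comp {d : ℕ} {F : Pt (d+1) → ℝ} {Φ : Pt d → Pt (d+1)} {p : Pt d}
    (hF : DifferentiableAt ℝ F (Φ p)) (hΦ : DifferentiableAt ℝ Φ p) (a : Fin d) :
    pd (fun q => F (Φ q)) a p = ∑ β, eF Φ a p β * pd F β (Φ p) := by
  unfold pd
  have h : (fun q => F (Φ q)) = F ∘ Φ := rfl
  rw [h, fderiv_comp p hF hΦ]
  simpa [eF, pd] using fderiv_eval hF (fderiv ℝ Φ p (Pi.single a 1))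

lemma eF_smooth {d : ℕ} {Φ : Pt d → Pt (d+1)} (hΦ : Sm Φ) (b : Fin d) (ν : Fin (d+1)) :
    ContDiff ℝ (⊤ : ℕ∞) (fun q => eF Φ b q ν) := by
  have h1 : ContDiff ℝ (⊤ : ℕ∞) (fun q => fderiv ℝ Φ q) :=
    ContDiff.fderiv_right hΦ inf_add_one
  have h2 : ContDiff ℝ (⊤ : ℕ∞) (fun q => fderiv ℝ Φ q (Pi.single b 1)) :=
    h1.clm_apply contDiff_const
  exact contDiff_pi.mp h2 ν

lemma pd_eF_symm {d : ℕ} {Φ : Pt d → Pt (d+1)} (hΦ : Sm Φ) (a b : Fin d) (ν : Fin (d+1))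
    (p : Pt d) : pd (fun q => eF Φ b q ν) a p = pd (fun q => eF Φ a q ν) b p := by
  set Φν : Pt d → ℝ := fun q => Φ q ν with hΦν
  have hΦνs : ContDiff ℝ (⊤ : ℕ∞) Φν := contDiff_pi.mp hΦ ν
  have hdiff : Differentiable ℝ Φν := hΦνs.differentiable one_le_inf
  have hfd : ContDiff ℝ (⊤ : ℕ∞) (fderiv ℝ Φν) := hΦνs.fderiv_right inf_add_one
  have hcomp : ∀ (c : Fin d) (q : Pt d), eF Φ c q ν = fderiv ℝ Φν q (Pi.single c 1) := by
    intro c q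
    have h : Φν = (ContinuousLinearMap.proj (R := ℝ) (φ := fun _ : Fin (d+1) => ℝ) ν) ∘ Φ := rfl
    rw [h, fderiv_comp q (ContinuousLinearMap.differentiableAt _)
      ((hΦ.differentiable one_le_inf) q)]
    simp [eF]
  have key : ∀ (c e : Fin d), pd (fun q => eF Φ c q ν) e p
      = fderiv ℝ (fderiv ℝ Φν) p (Pi.single e 1) (Pi.single c 1) := by
    intro c e
    have h1 : pd (fun q => eF Φ c q ν) e p
        = pd (fun q => fderiv ℝ Φν q (Pi.single c 1)) e p :=
      pd_congr (fun q => by rw [hcomp]) e p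
    rw [h1]
    unfold pd
    rw [fderiv_clm_apply ((hfd.differentiable one_le_inf) p)
      (differentiableAt_const _)]
    simp
  rw [key a b, key b a]
  have hsymm := second_derivative_symmetric (f := Φν) (f' := fderiv ℝ Φν)
    (f'' := fderiv ℝ (fderiv ℝ Φν) p) (x := p)
    (fun y => (hdiff y).hasFDerivAt)
    (((hfd.differentiable one_le_inf) p).hasFDerivAt)
  exact (hsymm (Pi.single b 1) (Pi.single a 1)).symm

section Alg
variable {n : ℕ} (g ginv : Pt n → Fin n → Fin n → ℝ)
  (hsymm : ∀ x a b, g x a b = g x b a)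
  (hinv : ∀ x a b, (∑ c, ginv x a c * g x c b) = if a = b then (1:ℝ) else 0)

include hsymm hinv in
lemma inv_flip : ∀ x a b, (∑ c, g x a c * ginv x c b) = if a = b then (1:ℝ) else 0 := by
  intro x a b
  have hmat : (Matrix.of (ginv x)) * (Matrix.of (g x)) = 1 := by
    ext i j
    simpa [Matrix.mul_apply, Matrix.one_apply] using hinv x i j
  have hmat2 : (Matrix.of (g x)) * (Matrix.of (ginv x)) = 1 := mul_eq_one_comm.mp hmat
  have := congrFun (congrFun hmat2 a) b
  simpa [Matrix.mul_apply, Matrix.one_apply] using this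

include hsymm hinv in
lemma ginv_symm : ∀ x a b, ginv x a b = ginv x b a := by
  intro x a b
  have hmat : (Matrix.of (ginv x)) * (Matrix.of (g x)) = 1 := by
    ext i j
    simpa [Matrix.mul_apply, Matrix.one_apply] using hinv x i j
  have hmat2 : (Matrix.of (g x)) * (Matrix.of (ginv x)) = 1 := mul_eq_one_comm.mp hmat
  have hgT : Matrix.transpose (Matrix.of (g x)) = Matrix.of (g x) := by
    ext i j; exact hsymm x j i
  have h3 : (Matrix.of (g x)) * Matrix.transpose (Matrix.of (ginv x)) = 1 := by
    have h5 := congrArg Matrix.transpose hmat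
    rw [Matrix.transpose_mul, hgT, Matrix.transpose_one] at h5
    exact h5
  have h4 : Matrix.transpose (Matrix.of (ginv x)) = Matrix.of (ginv x) := by
    calc Matrix.transpose (Matrix.of (ginv x))
        = 1 * Matrix.transpose (Matrix.of (ginv x)) := by rw [one_mul]
      _ = (Matrix.of (ginv x) * Matrix.of (g x)) * Matrix.transpose (Matrix.of (ginv x)) := by
          rw [hmat]
      _ = Matrix.of (ginv x) * (Matrix.of (g x) * Matrix.transpose (Matrix.of (ginv x))) := by
          rw [Matrix.mul_assoc]
      _ = Matrix.of (ginv x) * 1 := by rw [h3]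
      _ = Matrix.of (ginv x) := by rw [mul_one]
  exact (congrFun (congrFun h4 a) b).symm

include hsymm in
lemma chr_symm : ∀ x c a b, Chr g ginv c a b x = Chr g ginv c b a x := by
  intro x c a b
  unfold Chr
  congr 1
  apply Finset.sum_congr rfl
  intro d _
  have h1 : pd (fun y => g y a b) d x = pd (fun y => g y b a) d x :=
    pd_congr (fun y => hsymm y a b) d x
  rw [h1]
  ring

include hsymm hinv in
lemma compat : ∀ x μ ν ρ, pd (fun y => g y ν ρ) μ x
    = (∑ c, Chr g ginv c μ ν x * g x c ρ) + (∑ c, Chr g ginv c μ ρ x * g x c ν) := by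
  intro x μ ν ρ
  have key : ∀ ν' ρ', (∑ c, Chr g ginv c μ ν' x * g x c ρ')
      = (1/2) * (pd (fun y => g y ρ' μ) ν' x + pd (fun y => g y ρ' ν') μ x
          - pd (fun y => g y μ ν') ρ' x) := by
    intro ν' ρ'
    have step1 : (∑ c, Chr g ginv c μ ν' x * g x c ρ')
        = ∑ e, (∑ c, g x ρ' c * ginv x c e) * ((1/2) *
            (pd (fun y => g y e μ) ν' x + pd (fun y => g y e ν') μ x
              - pd (fun y => g y μ ν') e x)) := by
      unfold Chr
      simp only [Finset.sum_mul, Finset.mul_sum]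
      rw [Finset.sum_comm]
      apply Finset.sum_congr rfl; intro e _
      apply Finset.sum_congr rfl; intro c _
      rw [hsymm x ρ' c]
      ring
    rw [step1]
    have step2 : ∀ e : Fin n, (∑ c, g x ρ' c * ginv x c e) = if ρ' = e then (1:ℝ) else 0 :=
      fun e => inv_flip g ginv hsymm hinv x ρ' e
    simp only [step2, ite_mul, one_mul, zero_mul]
    rw [Finset.sum_ite_eq]
    simp
  rw [key ν ρ, key ρ ν]
  have e1 : pd (fun y => g y ρ μ) ν x = pd (fun y => g y μ ρ) ν x :=
    pd_congr (fun y => hsymm y ρ μ) ν x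
  have e2 : pd (fun y => g y ν μ) ρ x = pd (fun y => g y μ ν) ρ x :=
    pd_congr (fun y => hsymm y ν μ) ρ x
  have e3 : pd (fun y => g y ν ρ) μ x = pd (fun y => g y ρ ν) μ x :=
    pd_congr (fun y => hsymm y ν ρ) μ x
  rw [e1, e2, e3]
  ring

include hsymm in
lemma gdot_symm : ∀ x u v, gdot g x u v = gdot g x v u := by
  intro x u v
  unfold gdot
  rw [Finset.sum_comm]
  apply Finset.sum_congr rfl; intro b _
  apply Finset.sum_congr rfl; intro a _
  rw [hsymm x b a]; ring

lemma ip_flat {ξ : Pt n → Pt n} (x : Pt n) (u : Fin n → ℝ) :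
    ip (flat g ξ x) u = gdot g x u (ξ x) := by
  unfold ip flat gdot
  simp only [Finset.sum_mul]
  apply Finset.sum_congr rfl; intro b _
  apply Finset.sum_congr rfl; intro c _
  ring

end Alg

section SumRot
variable {ι : Type*} [Fintype ι]

lemma sum_rot3 (f : ι → ι → ι → ℝ) :
    (∑ a, ∑ b, ∑ c, f a b c) = ∑ c, ∑ a, ∑ b, f a b c := by
  calc (∑ a, ∑ b, ∑ c, f a b c) = ∑ a, ∑ c, ∑ b, f a b c := by
        apply Finset.sum_congr rfl; intro a _; exact Finset.sum_comm
    _ = ∑ c, ∑ a, ∑ b, f a b c := Finset.sum_comm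

lemma sum_rot4 (f : ι → ι → ι → ι → ℝ) :
    (∑ a, ∑ b, ∑ c, ∑ e, f a b c e) = ∑ e, ∑ a, ∑ b, ∑ c, f a b c e := by
  have h1 : ∀ a, (∑ b, ∑ c, ∑ e, f a b c e) = ∑ e, ∑ b, ∑ c, f a b c e :=
    fun a => sum_rot3 (f a)
  calc (∑ a, ∑ b, ∑ c, ∑ e, f a b c e) = ∑ a, ∑ e, ∑ b, ∑ c, f a b c e := by
        apply Finset.sum_congr rfl; intro a _; exact h1 a
    _ = ∑ e, ∑ a, ∑ b, ∑ c, f a b c e := Finset.sum_comm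

end SumRot

section Side
variable {d : ℕ} (g ginv : Pt (d+1) → Fin (d+1) → Fin (d+1) → ℝ)
  (Φ : Pt d → Pt (d+1)) (ℓ : Pt d → Pt (d+1)) (ξ : Pt (d+1) → Pt (d+1))
  (hg : ∀ a b, ContDiff ℝ (⊤ : ℕ∞) fun x => g x a b)
  (hΦ : Sm Φ) (hℓ : Sm ℓ) (hξ : Sm ξ)

include hg hξ in
lemma flat_smooth : ∀ α, ContDiff ℝ (⊤ : ℕ∞) (fun y => flat g ξ y α) := by
  intro α
  unfold flat
  exact ContDiff.sum (fun c _ => (hg α c).mul (contDiff_pi.mp hξ c))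

include hg hΦ hξ in
lemma E_pullflat : ∀ (p : Pt d) (a : Fin d) (α : Fin (d+1)),
    pd (fun q => flat g ξ (Φ q) α) a p
      = ∑ ρ, (pd (fun q => g (Φ q) α ρ) a p * ξ (Φ p) ρ
          + g (Φ p) α ρ * pd (fun q => ξ (Φ q) ρ) a p) := by
  intro p a α
  have hgd : ∀ ρ, DifferentiableAt ℝ (fun q => g (Φ q) α ρ) p := fun ρ =>
    (((hg α ρ).comp hΦ).differentiable one_le_inf p)
  have hxd : ∀ ρ, DifferentiableAt ℝ (fun q => ξ (Φ q) ρ) p := fun ρ =>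
    ((((contDiff_pi.mp hξ ρ)).comp hΦ).differentiable one_le_inf p)
  have h0 : pd (fun q => flat g ξ (Φ q) α) a p
      = pd (fun q => ∑ ρ, (fun (ρ' : Fin (d+1)) (q' : Pt d) =>
          g (Φ q') α ρ' * ξ (Φ q') ρ') ρ q) a p :=
    pd_congr (fun q => rfl) a p
  rw [h0, pd_sum (fun (ρ' : Fin (d+1)) (q' : Pt d) => g (Φ q') α ρ' * ξ (Φ q') ρ')
    (fun ρ => ((hgd ρ).mul (hxd ρ)))]
  apply Finset.sum_congr rfl; intro ρ _
  exact pd_mul (hgd ρ) (hxd ρ) a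

include hg hΦ hξ in
lemma E_chain_flat : ∀ (p : Pt d) (a : Fin d) (α : Fin (d+1)),
    (∑ β, eF Φ a p β * pd (fun y => flat g ξ y α) β (Φ p))
      = pd (fun q => flat g ξ (Φ q) α) a p :=
  fun p a α => (pd_comp ((flat_smooth g ξ hg hξ α).differentiable one_le_inf (Φ p))
    (hΦ.differentiable one_le_inf p) a).symm

-- pd of q ↦ gdot g (Φ q) (V q) (ξ (Φ q)) for smooth V along σ
lemma E_V (V : Pt d → Pt (d+1)) (hV : Sm V) (p : Pt d) (a : Fin d)
    (hg : ∀ a b, ContDiff ℝ (⊤ : ℕ∞) fun x => g x a b) (hΦ : Sm Φ) (hξ : Sm ξ) :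
    pd (fun q => gdot g (Φ q) (V q) (ξ (Φ q))) a p
      = ∑ ν, (pd (fun q => V q ν) a p * flat g ξ (Φ p) ν
          + V p ν * pd (fun q => flat g ξ (Φ q) ν) a p) := by
  have hVd : ∀ ν, DifferentiableAt ℝ (fun q => V q ν) p := fun ν =>
    ((contDiff_pi.mp hV ν).differentiable one_le_inf p)
  have hfd : ∀ ν, DifferentiableAt ℝ (fun q => flat g ξ (Φ q) ν) p := fun ν =>
    (((flat_smooth g ξ hg hξ ν).comp hΦ).differentiable one_le_inf p)
  have h0 : pd (fun q => gdot g (Φ q) (V q) (ξ (Φ q))) a p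
      = pd (fun q => ∑ ν, (fun (ν' : Fin (d+1)) (q' : Pt d) =>
          V q' ν' * flat g ξ (Φ q') ν') ν q) a p := by
    apply pd_congr (fun q => ?_)
    show gdot g (Φ q) (V q) (ξ (Φ q)) = ∑ ν, V q ν * flat g ξ (Φ q) ν
    unfold gdot flat
    apply Finset.sum_congr rfl; intro ν _
    rw [Finset.mul_sum]
    apply Finset.sum_congr rfl; intro ρ _
    ring
  rw [h0, pd_sum (fun (ν' : Fin (d+1)) (q' : Pt d) => V q' ν' * flat g ξ (Φ q') ν')
    (fun ν => (hVd ν).mul (hfd ν))]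
  apply Finset.sum_congr rfl; intro ν _
  exact pd_mul (hVd ν) (hfd ν) a

end Side

section Side2
variable {d : ℕ} (g ginv : Pt (d+1) → Fin (d+1) → Fin (d+1) → ℝ)
  (Φ : Pt d → Pt (d+1)) (ℓ : Pt d → Pt (d+1)) (ξ : Pt (d+1) → Pt (d+1))
  (hg : ∀ a b, ContDiff ℝ (⊤ : ℕ∞) fun x => g x a b)
  (hΦ : Sm Φ) (hℓ : Sm ℓ) (hξ : Sm ξ)

include hg hΦ hξ in
lemma dext_split (p : Pt d) (u v : Fin (d+1) → ℝ) :
    dext (flat g ξ) (Φ p) u v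
      = (∑ β, v β * (∑ α, u α * pd (fun y => flat g ξ y β) α (Φ p)))
        - (∑ α, u α * (∑ β, v β * pd (fun y => flat g ξ y α) β (Φ p))) := by
  unfold dext
  simp only [mul_sub, Finset.sum_sub_distrib]
  congr 1
  · rw [Finset.sum_comm]
    apply Finset.sum_congr rfl; intro β _
    rw [Finset.mul_sum]
    apply Finset.sum_congr rfl; intro α _
    ring
  · apply Finset.sum_congr rfl; intro α _
    rw [Finset.mul_sum]
    apply Finset.sum_congr rfl; intro β _
    ring

include hg hΦ hξ in
lemma eV_rearranged (V : Pt d → Pt (d+1)) (hV : Sm V) (p : Pt d) (a : Fin d) :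
    (∑ β, V p β * pd (fun q => flat g ξ (Φ q) β) a p)
      = pd (fun q => gdot g (Φ q) (V q) (ξ (Φ q))) a p
        - ∑ ν, pd (fun q => V q ν) a p * flat g ξ (Φ p) ν := by
  rw [E_V g Φ ξ V hV p a hg hΦ hξ]
  rw [Finset.sum_add_distrib]
  ring

include hg hΦ hξ in
lemma PS1 (p : Pt d) (a b : Fin d) :
    dext (flat g ξ) (Φ p) (eF Φ a p) (eF Φ b p)
      = pd (fun q => gdot g (Φ q) (eF Φ b q) (ξ (Φ q))) a p
        - pd (fun q => gdot g (Φ q) (eF Φ a q) (ξ (Φ q))) b p := by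
  have heFsm : ∀ c : Fin d, Sm (eF Φ c) := fun c =>
    contDiff_pi.mpr (fun ν => eF_smooth hΦ c ν)
  rw [dext_split g Φ ξ hg hΦ hξ p]
  have h1 : ∀ β : Fin (d+1), (∑ α, eF Φ a p α * pd (fun y => flat g ξ y β) α (Φ p))
      = pd (fun q => flat g ξ (Φ q) β) a p := fun β => E_chain_flat g Φ ξ hg hΦ hξ p a β
  have h2 : ∀ α : Fin (d+1), (∑ β, eF Φ b p β * pd (fun y => flat g ξ y α) β (Φ p))
      = pd (fun q => flat g ξ (Φ q) α) b p := fun α => E_chain_flat g Φ ξ hg hΦ hξ p b α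
  simp only [h1, h2]
  rw [eV_rearranged g Φ ξ hg hΦ hξ (eF Φ b) (heFsm b) p a,
    eV_rearranged g Φ ξ hg hΦ hξ (eF Φ a) (heFsm a) p b]
  have h3 : (∑ ν, pd (fun q => eF Φ b q ν) a p * flat g ξ (Φ p) ν)
      = ∑ ν, pd (fun q => eF Φ a q ν) b p * flat g ξ (Φ p) ν := by
    apply Finset.sum_congr rfl; intro ν _
    rw [pd_eF_symm hΦ a b ν p]
  rw [h3]
  ring
end Side2

lemma sum_rot3' {ι κ : Type*} [Fintype ι] [Fintype κ] (f : ι → ι → κ → ℝ) :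
    (∑ a, ∑ b, ∑ c, f a b c) = ∑ c, ∑ a, ∑ b, f a b c := by
  calc (∑ a, ∑ b, ∑ c, f a b c) = ∑ a, ∑ c, ∑ b, f a b c := by
        apply Finset.sum_congr rfl; intro a _; exact Finset.sum_comm
    _ = ∑ c, ∑ a, ∑ b, f a b c := Finset.sum_comm

lemma sum_rot4' {ι κ : Type*} [Fintype ι] [Fintype κ] (f : ι → ι → ι → κ → ℝ) :
    (∑ a, ∑ b, ∑ c, ∑ e, f a b c e) = ∑ e, ∑ a, ∑ b, ∑ c, f a b c e := by
  calc (∑ a, ∑ b, ∑ c, ∑ e, f a b c e) = ∑ a, ∑ e, ∑ b, ∑ c, f a b c e := by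
        apply Finset.sum_congr rfl; intro a _; exact sum_rot3' (f a)
    _ = ∑ e, ∑ a, ∑ b, ∑ c, f a b c e := Finset.sum_comm

section Side3
variable {d : ℕ} (g ginv : Pt (d+1) → Fin (d+1) → Fin (d+1) → ℝ)
  (Φ : Pt d → Pt (d+1)) (ℓ : Pt d → Pt (d+1)) (ξ : Pt (d+1) → Pt (d+1))
  (hg : ∀ a b, ContDiff ℝ (⊤ : ℕ∞) fun x => g x a b)
  (hsymm : ∀ x a b, g x a b = g x b a)
  (hinv : ∀ x a b, (∑ c, ginv x a c * g x c b) = if a = b then (1:ℝ) else 0)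
  (hΦ : Sm Φ) (hℓ : Sm ℓ) (hξ : Sm ξ)

include hg hsymm hinv hΦ hℓ in
lemma E_H (p : Pt d) (a : Fin d) (d' : Fin d) :
    Hgen g ginv Φ ℓ a d' p
      = (∑ ν, ∑ ρ, ∑ μ, ∑ c, eF Φ d' p ν * eF Φ a p μ * Chr g ginv c μ ρ (Φ p)
          * g (Φ p) c ν * ℓ p ρ)
        + (∑ ν, ∑ ρ, eF Φ d' p ν * g (Φ p) ν ρ * pd (fun q => ℓ q ρ) a p) := by
  have hgd : ∀ ν ρ, DifferentiableAt ℝ (fun q => g (Φ q) ν ρ) p := fun ν ρ =>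
    (((hg ν ρ).comp hΦ).differentiable one_le_inf p)
  have hld : ∀ ρ, DifferentiableAt ℝ (fun q => ℓ q ρ) p := fun ρ =>
    ((contDiff_pi.mp hℓ ρ).differentiable one_le_inf p)
  have hpdflatS : ∀ ν, pd (fun q => flatS g Φ ℓ q ν) a p
      = ∑ ρ, (pd (fun q => g (Φ q) ν ρ) a p * ℓ p ρ
          + g (Φ p) ν ρ * pd (fun q => ℓ q ρ) a p) := by
    intro ν
    have h0 : pd (fun q => flatS g Φ ℓ q ν) a p
        = pd (fun q => ∑ ρ, (fun (ρ' : Fin (d+1)) (q' : Pt d) =>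
            g (Φ q') ν ρ' * ℓ q' ρ') ρ q) a p := pd_congr (fun q => rfl) a p
    rw [h0, pd_sum (fun (ρ' : Fin (d+1)) (q' : Pt d) => g (Φ q') ν ρ' * ℓ q' ρ')
      (fun ρ => (hgd ν ρ).mul (hld ρ))]
    exact Finset.sum_congr rfl (fun ρ _ => pd_mul (hgd ν ρ) (hld ρ) a)
  have hpdg : ∀ ν ρ, pd (fun q => g (Φ q) ν ρ) a p
      = ∑ μ, eF Φ a p μ * ((∑ c, Chr g ginv c μ ν (Φ p) * g (Φ p) c ρ)
          + (∑ c, Chr g ginv c μ ρ (Φ p) * g (Φ p) c ν)) := by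
    intro ν ρ
    rw [pd_comp ((hg ν ρ).differentiable one_le_inf (Φ p))
      (hΦ.differentiable one_le_inf p) a]
    exact Finset.sum_congr rfl (fun μ _ => by
      rw [compat g ginv hsymm hinv (Φ p) μ ν ρ])
  unfold Hgen
  simp only [hpdflatS, hpdg]
  have hbr : ∀ ν, ((∑ ρ, ((∑ μ, eF Φ a p μ * ((∑ c, Chr g ginv c μ ν (Φ p) * g (Φ p) c ρ)
          + (∑ c, Chr g ginv c μ ρ (Φ p) * g (Φ p) c ν))) * ℓ p ρ
          + g (Φ p) ν ρ * pd (fun q => ℓ q ρ) a p))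
        - ∑ c, (∑ μ, eF Φ a p μ * Chr g ginv c μ ν (Φ p)) * flatS g Φ ℓ p c)
      = (∑ ρ, ∑ μ, ∑ c, eF Φ a p μ * Chr g ginv c μ ρ (Φ p) * g (Φ p) c ν * ℓ p ρ)
        + (∑ ρ, g (Φ p) ν ρ * pd (fun q => ℓ q ρ) a p) := by
    intro ν
    unfold flatS
    simp only [mul_add, add_mul, Finset.sum_add_distrib, Finset.sum_mul, Finset.mul_sum]
    have h1 : (∑ x : Fin (d+1), ∑ x_1 : Fin (d+1), ∑ i : Fin (d+1),
        eF Φ a p x_1 * (Chr g ginv i x_1 ν (Φ p) * g (Φ p) i x) * ℓ p x)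
        = ∑ x : Fin (d+1), ∑ x_1 : Fin (d+1), ∑ i : Fin (d+1),
          eF Φ a p i * Chr g ginv x i ν (Φ p) * (g (Φ p) x x_1 * ℓ p x_1) := by
      rw [sum_rot3 (fun x x_1 i =>
        eF Φ a p x_1 * (Chr g ginv i x_1 ν (Φ p) * g (Φ p) i x) * ℓ p x)]
      apply Finset.sum_congr rfl; intro c _
      apply Finset.sum_congr rfl; intro r _
      apply Finset.sum_congr rfl; intro m _
      ring
    have h2 : (∑ x : Fin (d+1), ∑ x_1 : Fin (d+1), ∑ i : Fin (d+1),
        eF Φ a p x_1 * (Chr g ginv i x_1 x (Φ p) * g (Φ p) i ν) * ℓ p x)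
        = ∑ ρ : Fin (d+1), ∑ μ : Fin (d+1), ∑ c : Fin (d+1),
          eF Φ a p μ * Chr g ginv c μ ρ (Φ p) * g (Φ p) c ν * ℓ p ρ := by
      apply Finset.sum_congr rfl; intro r _
      apply Finset.sum_congr rfl; intro m _
      apply Finset.sum_congr rfl; intro c _
      ring
    rw [h1, h2]
    ring

  simp only [hbr]
  rw [← Finset.sum_add_distrib]
  apply Finset.sum_congr rfl; intro ν _
  rw [mul_add]
  congr 1
  · simp only [Finset.mul_sum]
    apply Finset.sum_congr rfl; intro ρ _
    apply Finset.sum_congr rfl; intro μ _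
    apply Finset.sum_congr rfl; intro c _
    ring
  · simp only [Finset.mul_sum]
    apply Finset.sum_congr rfl; intro ρ _
    ring

end Side3

section Side4
variable {d : ℕ} (g ginv : Pt (d+1) → Fin (d+1) → Fin (d+1) → ℝ)
  (Φ : Pt d → Pt (d+1)) (ℓ : Pt d → Pt (d+1)) (ξ : Pt (d+1) → Pt (d+1))
  (hg : ∀ a b, ContDiff ℝ (⊤ : ℕ∞) fun x => g x a b)
  (hsymm : ∀ x a b, g x a b = g x b a)
  (hinv : ∀ x a b, (∑ c, ginv x a c * g x c b) = if a = b then (1:ℝ) else 0)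
  (hΦ : Sm Φ) (hℓ : Sm ℓ) (hξ : Sm ξ)

include hg hsymm hinv hΦ hℓ hξ in
lemma PS2 (ξc : Fin d → Pt d → ℝ) (htan : ∀ q, ξ (Φ q) = ∑ b, ξc b q • eF Φ b q)
    (p : Pt d) (a : Fin d) :
    dext (flat g ξ) (Φ p) (ℓ p) (eF Φ a p)
      = (∑ α, ∑ β, ℓ p α * eF Φ a p β * covD g ginv (flat g ξ) (Φ p) α β)
        - pd (fun q => gdot g (Φ q) (ℓ q) (ξ (Φ q))) a p
        + ∑ dd, ξc dd p * Hgen g ginv Φ ℓ a dd p := by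
  rw [dext_split g Φ ξ hg hΦ hξ p (ℓ p) (eF Φ a p)]
  have hchain : ∀ α : Fin (d+1), (∑ β, eF Φ a p β * pd (fun y => flat g ξ y α) β (Φ p))
      = pd (fun q => flat g ξ (Φ q) α) a p := fun α => E_chain_flat g Φ ξ hg hΦ hξ p a α
  simp only [hchain]
  rw [eV_rearranged g Φ ξ hg hΦ hξ ℓ hℓ p a]
  have hcov : ∀ α β : Fin (d+1), pd (fun y => flat g ξ y β) α (Φ p)
      = covD g ginv (flat g ξ) (Φ p) α β
        + ∑ c, Chr g ginv c α β (Φ p) * flat g ξ (Φ p) c := by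
    intro α β; unfold covD; ring
  simp only [hcov, mul_add, Finset.mul_sum, Finset.sum_add_distrib]
  have hflattan : ∀ c, flat g ξ (Φ p) c
      = ∑ dd, ξc dd p * (∑ ρ, g (Φ p) c ρ * eF Φ dd p ρ) := by
    intro c
    unfold flat
    have hx : ∀ ρ, ξ (Φ p) ρ = ∑ dd, ξc dd p * eF Φ dd p ρ := by
      intro ρ
      rw [htan p]
      simp [Finset.sum_apply]
    simp only [hx, Finset.mul_sum]
    rw [Finset.sum_comm]
    apply Finset.sum_congr rfl; intro dd _
    apply Finset.sum_congr rfl; intro ρ _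
    ring
  have hB : (∑ x : Fin (d+1), ∑ i : Fin (d+1),
      eF Φ a p x * (ℓ p i * covD g ginv (flat g ξ) (Φ p) i x))
      = ∑ α, ∑ β, ℓ p α * eF Φ a p β * covD g ginv (flat g ξ) (Φ p) α β := by
    rw [Finset.sum_comm]
    apply Finset.sum_congr rfl; intro α _
    apply Finset.sum_congr rfl; intro β _
    ring
  have key : (∑ x : Fin (d+1), ∑ x_1 : Fin (d+1), ∑ i : Fin (d+1),
        eF Φ a p x * (ℓ p x_1 * (Chr g ginv i x_1 x (Φ p) * flat g ξ (Φ p) i)))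
      + (∑ ν, pd (fun q => ℓ q ν) a p * flat g ξ (Φ p) ν)
      = ∑ dd, ξc dd p * Hgen g ginv Φ ℓ a dd p := by
    simp only [hflattan]
    have pullΓ : (∑ x : Fin (d+1), ∑ x_1 : Fin (d+1), ∑ i : Fin (d+1),
          eF Φ a p x * (ℓ p x_1 * (Chr g ginv i x_1 x (Φ p)
            * ∑ dd, ξc dd p * (∑ ρ, g (Φ p) i ρ * eF Φ dd p ρ))))
        = ∑ dd, ∑ x : Fin (d+1), ∑ x_1 : Fin (d+1), ∑ i : Fin (d+1),
          eF Φ a p x * (ℓ p x_1 * (Chr g ginv i x_1 x (Φ p)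
            * (ξc dd p * (∑ ρ, g (Φ p) i ρ * eF Φ dd p ρ)))) := by
      rw [← sum_rot4' (fun x x_1 i dd => eF Φ a p x * (ℓ p x_1 * (Chr g ginv i x_1 x (Φ p)
            * (ξc dd p * (∑ ρ, g (Φ p) i ρ * eF Φ dd p ρ)))))]
      apply Finset.sum_congr rfl; intro x _
      apply Finset.sum_congr rfl; intro x1 _
      apply Finset.sum_congr rfl; intro i _
      rw [Finset.mul_sum, Finset.mul_sum, Finset.mul_sum]
    have pullP : (∑ ν, pd (fun q => ℓ q ν) a p
          * ∑ dd, ξc dd p * (∑ ρ, g (Φ p) ν ρ * eF Φ dd p ρ))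
        = ∑ dd, ∑ ν, pd (fun q => ℓ q ν) a p
            * (ξc dd p * (∑ ρ, g (Φ p) ν ρ * eF Φ dd p ρ)) := by
      calc (∑ ν, pd (fun q => ℓ q ν) a p
          * ∑ dd, ξc dd p * (∑ ρ, g (Φ p) ν ρ * eF Φ dd p ρ))
          = ∑ ν, ∑ dd, pd (fun q => ℓ q ν) a p
              * (ξc dd p * (∑ ρ, g (Φ p) ν ρ * eF Φ dd p ρ)) := by
            apply Finset.sum_congr rfl; intro ν _
            rw [Finset.mul_sum]
        _ = ∑ dd, ∑ ν, pd (fun q => ℓ q ν) a p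
              * (ξc dd p * (∑ ρ, g (Φ p) ν ρ * eF Φ dd p ρ)) := Finset.sum_comm
    rw [pullΓ, pullP, ← Finset.sum_add_distrib]
    apply Finset.sum_congr rfl; intro dd _
    rw [E_H g ginv Φ ℓ hg hsymm hinv hΦ hℓ p a dd, mul_add]
    congr 1
    · -- Γ part per dd
      have expand : (∑ x : Fin (d+1), ∑ x_1 : Fin (d+1), ∑ i : Fin (d+1),
            eF Φ a p x * (ℓ p x_1 * (Chr g ginv i x_1 x (Φ p)
              * (ξc dd p * (∑ ρ, g (Φ p) i ρ * eF Φ dd p ρ)))))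
          = ∑ x : Fin (d+1), ∑ x_1 : Fin (d+1), ∑ i : Fin (d+1), ∑ ρ : Fin (d+1),
            eF Φ a p x * (ℓ p x_1 * (Chr g ginv i x x_1 (Φ p)
              * (ξc dd p * (g (Φ p) i ρ * eF Φ dd p ρ)))) := by
        apply Finset.sum_congr rfl; intro x _
        apply Finset.sum_congr rfl; intro x1 _
        apply Finset.sum_congr rfl; intro i _
        rw [chr_symm g ginv hsymm (Φ p) i x1 x]
        simp only [Finset.mul_sum]
      rw [expand]
      rw [sum_rot4 (fun x x_1 i ρ => eF Φ a p x * (ℓ p x_1 * (Chr g ginv i x x_1 (Φ p)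
              * (ξc dd p * (g (Φ p) i ρ * eF Φ dd p ρ)))))]
      rw [Finset.mul_sum]
      apply Finset.sum_congr rfl; intro ν _
      rw [Finset.sum_comm]
      rw [Finset.mul_sum]
      apply Finset.sum_congr rfl; intro ρ _
      rw [Finset.mul_sum]
      apply Finset.sum_congr rfl; intro μ _
      rw [Finset.mul_sum]
      apply Finset.sum_congr rfl; intro c _
      ring
    · -- P part per dd
      simp only [Finset.mul_sum]
      refine Eq.trans Finset.sum_comm ?_
      apply Finset.sum_congr rfl; intro ν _
      apply Finset.sum_congr rfl; intro ρ _
      rw [hsymm (Φ p) ρ ν]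
      ring
  rw [hB, ← key]
  ring
end Side4

lemma dext_antisymm {n : ℕ} (ω : Pt n → Fin n → ℝ) (x : Pt n) (u v : Fin n → ℝ) :
    dext ω x u v = - dext ω x v u := by
  unfold dext
  rw [← Finset.sum_neg_distrib]
  refine Eq.trans Finset.sum_comm ?_
  apply Finset.sum_congr rfl; intro α _
  rw [← Finset.sum_neg_distrib]
  apply Finset.sum_congr rfl; intro β _
  ring

lemma dext_self {n : ℕ} (ω : Pt n → Fin n → ℝ) (x : Pt n) (u : Fin n → ℝ) :
    dext ω x u u = 0 := by
  have h := dext_antisymm ω x u u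
  linarith

lemma gdot_tan {n m : ℕ} (g : Pt n → Fin n → Fin n → ℝ) (x : Pt n) (u : Fin n → ℝ)
    (c : Fin m → ℝ) (v : Fin m → Fin n → ℝ) :
    gdot g x u (∑ b, c b • v b) = ∑ b, c b * gdot g x u (v b) := by
  unfold gdot
  simp only [Finset.sum_apply, Pi.smul_apply, smul_eq_mul, Finset.mul_sum]
  rw [sum_rot3' (fun a b' b => g x a b' * u a * (c b * v b b'))]
  apply Finset.sum_congr rfl; intro b _
  apply Finset.sum_congr rfl; intro a _
  apply Finset.sum_congr rfl; intro b' _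
  ring

lemma alt4_eq_zero {ι : Type*} (v : Fin 4 → ι) (w : Fin 4 → ι → ℝ) (i j : Fin 4)
    (hij : i ≠ j) (hw : w i = w j) :
    (∑ σ : Equiv.Perm (Fin 4), ((Equiv.Perm.sign σ : ℤ) : ℝ)
      * (w 0 (v (σ 0)) * w 1 (v (σ 1)) * w 2 (v (σ 2)) * w 3 (v (σ 3)))) = 0 := by
  have hgoal : (∑ σ : Equiv.Perm (Fin 4), ((Equiv.Perm.sign σ : ℤ) : ℝ)
      * (w 0 (v (σ 0)) * w 1 (v (σ 1)) * w 2 (v (σ 2)) * w 3 (v (σ 3))))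
      = ∑ σ : Equiv.Perm (Fin 4), ((Equiv.Perm.sign σ : ℤ) : ℝ) * ∏ k, w k (v (σ k)) :=
    Finset.sum_congr rfl (fun σ _ => by rw [Fin.prod_univ_four])
  rw [hgoal]
  have hws : ∀ k, w (Equiv.swap i j k) = w k := by
    intro k
    rcases eq_or_ne k i with rfl | hki
    · rw [Equiv.swap_apply_left]; exact hw.symm
    rcases eq_or_ne k j with rfl | hkj
    · rw [Equiv.swap_apply_right]; exact hw
    · rw [Equiv.swap_apply_of_ne_of_ne hki hkj]
  have hτ : ∀ σ : Equiv.Perm (Fin 4),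
      ((Equiv.Perm.sign (σ * Equiv.swap i j) : ℤ) : ℝ)
          * (∏ k, w k (v ((σ * Equiv.swap i j) k)))
        = - (((Equiv.Perm.sign σ : ℤ) : ℝ) * ∏ k, w k (v (σ k))) := by
    intro σ
    have hsign : ((Equiv.Perm.sign (σ * Equiv.swap i j) : ℤ) : ℝ)
        = -((Equiv.Perm.sign σ : ℤ) : ℝ) := by
      simp [Equiv.Perm.sign_mul, Equiv.Perm.sign_swap hij]
    have hprod : (∏ k, w k (v ((σ * Equiv.swap i j) k))) = ∏ k, w k (v (σ k)) := by
      have step : ∀ k, w k (v ((σ * Equiv.swap i j) k))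
          = (fun k' => w (Equiv.swap i j k') (v (σ k'))) (Equiv.swap i j k) := by
        intro k
        simp only [Equiv.Perm.mul_apply]
        rw [Equiv.swap_apply_self]
      calc (∏ k, w k (v ((σ * Equiv.swap i j) k)))
          = ∏ k, (fun k' => w (Equiv.swap i j k') (v (σ k'))) (Equiv.swap i j k) := by
            exact Finset.prod_congr rfl (fun k _ => step k)
        _ = ∏ k, w (Equiv.swap i j k) (v (σ k)) :=
            Equiv.prod_comp (Equiv.swap i j) (fun k' => w (Equiv.swap i j k') (v (σ k')))
        _ = ∏ k, w k (v (σ k)) := Finset.prod_congr rfl (fun k _ => by rw [hws k])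
    rw [hsign, hprod]
    ring
  have hre : (∑ σ : Equiv.Perm (Fin 4), ((Equiv.Perm.sign (σ * Equiv.swap i j) : ℤ) : ℝ)
        * (∏ k, w k (v ((σ * Equiv.swap i j) k))))
      = ∑ σ : Equiv.Perm (Fin 4), ((Equiv.Perm.sign σ : ℤ) : ℝ) * ∏ k, w k (v (σ k)) := by
    have := Equiv.sum_comp (Equiv.mulRight (Equiv.swap i j))
      (fun σ : Equiv.Perm (Fin 4) => ((Equiv.Perm.sign σ : ℤ) : ℝ) * ∏ k, w k (v (σ k)))
    simpa using this
  simp only [hτ] at hre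
  rw [Finset.sum_neg_distrib] at hre
  linarith

lemma alt4_13 {ι : Type*} (v : Fin 4 → ι) (f g h : ι → ℝ) :
    (∑ σ : Equiv.Perm (Fin 4), ((Equiv.Perm.sign σ : ℤ) : ℝ)
      * (f (v (σ 0)) * g (v (σ 1)) * h (v (σ 2)) * g (v (σ 3)))) = 0 := by
  have := alt4_eq_zero v ![f, g, h, g] 1 3 (by decide) rfl
  simpa using this

lemma alt4_03 {ι : Type*} (v : Fin 4 → ι) (f g h : ι → ℝ) :
    (∑ σ : Equiv.Perm (Fin 4), ((Equiv.Perm.sign σ : ℤ) : ℝ)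
      * (f (v (σ 0)) * g (v (σ 1)) * h (v (σ 2)) * f (v (σ 3)))) = 0 := by
  have := alt4_eq_zero v ![f, g, h, f] 0 3 (by decide) rfl
  simpa using this

lemma alt4_12 {ι : Type*} (v : Fin 4 → ι) (f g h : ι → ℝ) :
    (∑ σ : Equiv.Perm (Fin 4), ((Equiv.Perm.sign σ : ℤ) : ℝ)
      * (f (v (σ 0)) * g (v (σ 1)) * g (v (σ 2)) * h (v (σ 3)))) = 0 := by
  have := alt4_eq_zero v ![f, g, g, h] 1 2 (by decide) rfl
  simpa using this

lemma alt4_02 {ι : Type*} (v : Fin 4 → ι) (f g h : ι → ℝ) :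
    (∑ σ : Equiv.Perm (Fin 4), ((Equiv.Perm.sign σ : ℤ) : ℝ)
      * (f (v (σ 0)) * g (v (σ 1)) * f (v (σ 2)) * h (v (σ 3)))) = 0 := by
  have := alt4_eq_zero v ![f, g, f, h] 0 2 (by decide) rfl
  simpa using this

lemma jump_form4 {d : ℕ}
    (gp ginvp gm ginvm : Pt (d+1) → Fin (d+1) → Fin (d+1) → ℝ)
    (Φp Φm : Pt d → Pt (d+1)) (ℓp ℓm : Pt d → Pt (d+1))
    (Xp Yp Xm Ym : Pt (d+1) → Pt (d+1)) (Xc Yc : Fin d → Pt d → ℝ)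
    (f1 f2 A1 A2 : Pt d → ℝ)
    (hgp : ∀ a b, ContDiff ℝ (⊤ : ℕ∞) fun x => gp x a b)
    (hgm : ∀ a b, ContDiff ℝ (⊤ : ℕ∞) fun x => gm x a b)
    (hgpsymm : ∀ x a b, gp x a b = gp x b a)
    (hgmsymm : ∀ x a b, gm x a b = gm x b a)
    (hinvp : ∀ x a b, (∑ c, ginvp x a c * gp x c b) = if a = b then (1:ℝ) else 0)
    (hinvm : ∀ x a b, (∑ c, ginvm x a c * gm x c b) = if a = b then (1:ℝ) else 0)
    (hΦp : Sm Φp) (hΦm : Sm Φm) (hℓp : Sm ℓp) (hℓm : Sm ℓm)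
    (hXp : Sm Xp) (hXm : Sm Xm) (hYp : Sm Yp) (hYm : Sm Ym)
    (hmatch : ∀ p a b, pull2 Φp gp p a b = pull2 Φm gm p a b)
    (hℓe : ∀ p a, gdot gp (Φp p) (ℓp p) (eF Φp a p) = gdot gm (Φm p) (ℓm p) (eF Φm a p))
    (htanXp : ∀ p, Xp (Φp p) = ∑ b, Xc b p • eF Φp b p)
    (htanXm : ∀ p, Xm (Φm p) = ∑ b, Xc b p • eF Φm b p)
    (htanYp : ∀ p, Yp (Φp p) = ∑ b, Yc b p • eF Φp b p)
    (htanYm : ∀ p, Ym (Φm p) = ∑ b, Yc b p • eF Φm b p)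
    (hjumpX : ∀ p a,
      (∑ α, ∑ β, ℓp p α * eF Φp a p β * covD gp ginvp (flat gp Xp) (Φp p) α β)
        - (∑ α, ∑ β, ℓm p α * eF Φm a p β * covD gm ginvm (flat gm Xm) (Φm p) α β)
      = f1 p * gdot gp (Φp p) (Xp (Φp p)) (eF Φp a p)
        + f2 p * gdot gp (Φp p) (Yp (Φp p)) (eF Φp a p))
    (hHX : ∀ p b,
      (∑ dd, Xc dd p * (Hgen gp ginvp Φp ℓp b dd p - Hgen gm ginvm Φm ℓm b dd p))
      = A1 p * gdot gp (Φp p) (Xp (Φp p)) (eF Φp b p)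
        + A2 p * gdot gp (Φp p) (Yp (Φp p)) (eF Φp b p)) :
    ∀ p (pick : Fin 4 → Option (Fin d)),
      form4 gp Yp Xp (Φp p) (fun i => frameV Φp ℓp p (pick i))
        = form4 gm Ym Xm (Φm p) (fun i => frameV Φm ℓm p (pick i)) := by
  intro p pick
  -- common tangential scalar products
  have hpull : ∀ (q : Pt d) (b dd : Fin d),
      gdot gp (Φp q) (eF Φp b q) (eF Φp dd q) = gdot gm (Φm q) (eF Φm b q) (eF Φm dd q) :=
    fun q b dd => hmatch q b dd
  have hG : ∀ (Z : Pt (d+1) → Pt (d+1)) (Zm : Pt (d+1) → Pt (d+1)) (Zc : Fin d → Pt d → ℝ),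
      (∀ q, Z (Φp q) = ∑ b, Zc b q • eF Φp b q) →
      (∀ q, Zm (Φm q) = ∑ b, Zc b q • eF Φm b q) →
      ∀ (q : Pt d) (b : Fin d),
        gdot gp (Φp q) (eF Φp b q) (Z (Φp q)) = gdot gm (Φm q) (eF Φm b q) (Zm (Φm q)) := by
    intro Z Zm Zc htp htm q b
    rw [htp q, htm q, gdot_tan, gdot_tan]
    exact Finset.sum_congr rfl (fun dd _ => by rw [hpull q b dd])
  have hs : ∀ (Z : Pt (d+1) → Pt (d+1)) (Zm : Pt (d+1) → Pt (d+1)) (Zc : Fin d → Pt d → ℝ),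
      (∀ q, Z (Φp q) = ∑ b, Zc b q • eF Φp b q) →
      (∀ q, Zm (Φm q) = ∑ b, Zc b q • eF Φm b q) →
      ∀ (q : Pt d),
        gdot gp (Φp q) (ℓp q) (Z (Φp q)) = gdot gm (Φm q) (ℓm q) (Zm (Φm q)) := by
    intro Z Zm Zc htp htm q
    rw [htp q, htm q, gdot_tan, gdot_tan]
    exact Finset.sum_congr rfl (fun dd _ => by rw [hℓe q dd])
  -- frame covector values
  set XP : Option (Fin d) → ℝ := fun i => ip (flat gp Xp (Φp p)) (frameV Φp ℓp p i) with hXPdef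
  set XM : Option (Fin d) → ℝ := fun i => ip (flat gm Xm (Φm p)) (frameV Φm ℓm p i) with hXMdef
  set YP : Option (Fin d) → ℝ := fun i => ip (flat gp Yp (Φp p)) (frameV Φp ℓp p i) with hYPdef
  set YM : Option (Fin d) → ℝ := fun i => ip (flat gm Ym (Φm p)) (frameV Φm ℓm p i) with hYMdef
  have hXPM : ∀ i, XP i = XM i := by
    intro i
    rw [hXPdef, hXMdef]
    cases i with
    | none =>
        show ip (flat gp Xp (Φp p)) (ℓp p) = ip (flat gm Xm (Φm p)) (ℓm p)
        rw [ip_flat, ip_flat]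
        exact hs Xp Xm Xc htanXp htanXm p
    | some b =>
        show ip (flat gp Xp (Φp p)) (eF Φp b p) = ip (flat gm Xm (Φm p)) (eF Φm b p)
        rw [ip_flat, ip_flat]
        exact hG Xp Xm Xc htanXp htanXm p b
  have hYPM : ∀ i, YP i = YM i := by
    intro i
    rw [hYPdef, hYMdef]
    cases i with
    | none =>
        show ip (flat gp Yp (Φp p)) (ℓp p) = ip (flat gm Ym (Φm p)) (ℓm p)
        rw [ip_flat, ip_flat]
        exact hs Yp Ym Yc htanYp htanYm p
    | some b =>
        show ip (flat gp Yp (Φp p)) (eF Φp b p) = ip (flat gm Ym (Φm p)) (eF Φm b p)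
        rw [ip_flat, ip_flat]
        exact hG Yp Ym Yc htanYp htanYm p b
  -- jump covector
  set N : Option (Fin d) → ℝ := fun i => Option.elim i 1 (fun _ => 0) with hNdef
  set α0 : ℝ := f1 p + A1 p with hα0
  set β0 : ℝ := f2 p + A2 p with hβ0
  set γ0 : ℝ := -(α0 * XP none + β0 * YP none) with hγ0
  set K : Option (Fin d) → ℝ := fun i => α0 * XP i + β0 * YP i + γ0 * N i with hKdef
  -- the jump of D
  set DP : Option (Fin d) → Option (Fin d) → ℝ :=
    fun i j => dext (flat gp Xp) (Φp p) (frameV Φp ℓp p i) (frameV Φp ℓp p j) with hDPdef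
  set DM : Option (Fin d) → Option (Fin d) → ℝ :=
    fun i j => dext (flat gm Xm) (Φm p) (frameV Φm ℓm p i) (frameV Φm ℓm p j) with hDMdef
  have hmix : ∀ a : Fin d, DP none (some a) = DM none (some a) + K (some a) := by
    intro a
    rw [hDPdef, hDMdef]
    show dext (flat gp Xp) (Φp p) (ℓp p) (eF Φp a p)
      = dext (flat gm Xm) (Φm p) (ℓm p) (eF Φm a p) + K (some a)
    rw [PS2 gp ginvp Φp ℓp Xp hgp hgpsymm hinvp hΦp hℓp hXp Xc htanXp p a,
      PS2 gm ginvm Φm ℓm Xm hgm hgmsymm hinvm hΦm hℓm hXm Xc htanXm p a]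
    have hpds : pd (fun q => gdot gp (Φp q) (ℓp q) (Xp (Φp q))) a p
        = pd (fun q => gdot gm (Φm q) (ℓm q) (Xm (Φm q))) a p :=
      pd_congr (fun q => hs Xp Xm Xc htanXp htanXm q) a p
    have hKval : K (some a)
        = α0 * ip (flat gp Xp (Φp p)) (eF Φp a p) + β0 * ip (flat gp Yp (Φp p)) (eF Φp a p) := by
      rw [hKdef]
      show α0 * XP (some a) + β0 * YP (some a) + γ0 * N (some a)
        = α0 * ip (flat gp Xp (Φp p)) (eF Φp a p) + β0 * ip (flat gp Yp (Φp p)) (eF Φp a p)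
      rw [hNdef]
      show α0 * XP (some a) + β0 * YP (some a) + γ0 * 0
        = α0 * ip (flat gp Xp (Φp p)) (eF Φp a p) + β0 * ip (flat gp Yp (Φp p)) (eF Φp a p)
      rw [hXPdef, hYPdef]
      show α0 * ip (flat gp Xp (Φp p)) (eF Φp a p) + β0 * ip (flat gp Yp (Φp p)) (eF Φp a p) + γ0 * 0
        = _
      ring
    have hHsum : (∑ dd, Xc dd p * Hgen gp ginvp Φp ℓp a dd p)
        - (∑ dd, Xc dd p * Hgen gm ginvm Φm ℓm a dd p)
        = A1 p * gdot gp (Φp p) (Xp (Φp p)) (eF Φp a p)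
          + A2 p * gdot gp (Φp p) (Yp (Φp p)) (eF Φp a p) := by
      rw [← hHX p a, ← Finset.sum_sub_distrib]
      exact Finset.sum_congr rfl (fun dd _ => by ring)
    have hB := hjumpX p a
    rw [hKval, hpds]
    rw [ip_flat, ip_flat,
      gdot_symm gp hgpsymm (Φp p) (eF Φp a p) (Xp (Φp p)),
      gdot_symm gp hgpsymm (Φp p) (eF Φp a p) (Yp (Φp p))]
    rw [hα0, hβ0]
    linarith
  have hDtan : ∀ a b : Fin d, DP (some a) (some b) = DM (some a) (some b) := by
    intro a b
    rw [hDPdef, hDMdef]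
    show dext (flat gp Xp) (Φp p) (eF Φp a p) (eF Φp b p)
      = dext (flat gm Xm) (Φm p) (eF Φm a p) (eF Φm b p)
    rw [PS1 gp Φp Xp hgp hΦp hXp p a b, PS1 gm Φm Xm hgm hΦm hXm p a b]
    rw [pd_congr (fun q => hG Xp Xm Xc htanXp htanXm q b) a p,
      pd_congr (fun q => hG Xp Xm Xc htanXp htanXm q a) b p]
  have hKnone : K none = 0 := by
    rw [hKdef]
    show α0 * XP none + β0 * YP none + γ0 * N none = 0
    rw [hNdef, hγ0]
    show α0 * XP none + β0 * YP none + -(α0 * XP none + β0 * YP none) * 1 = 0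
    ring
  have hD : ∀ i j, DP i j = DM i j + (N i * K j - N j * K i) := by
    intro i j
    cases i with
    | none =>
        cases j with
        | none =>
            have h1 : DP none none = 0 := dext_self _ _ _
            have h2 : DM none none = 0 := dext_self _ _ _
            rw [h1, h2]; ring
        | some a =>
            rw [hmix a]
            have : N none = 1 := rfl
            have h2 : N (some a) = 0 := rfl
            rw [this, h2]; ring
    | some a =>
        cases j with
        | none =>
            have h1 : DP (some a) none = - DP none (some a) := dext_antisymm _ _ _ _
            have h2 : DM (some a) none = - DM none (some a) := dext_antisymm _ _ _ _
            rw [h1, h2, hmix a]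
            have h3 : N none = 1 := rfl
            have h4 : N (some a) = 0 := rfl
            rw [h3, h4]; ring
        | some b =>
            rw [hDtan a b]
            have h4 : N (some a) = 0 := rfl
            have h5 : N (some b) = 0 := rfl
            rw [h4, h5]; ring
  -- final assembly
  show (1/2) * ∑ σ : Equiv.Perm (Fin 4), ((Equiv.Perm.sign σ : ℤ) : ℝ) *
      (YP (pick (σ 0)) * XP (pick (σ 1)) * DP (pick (σ 2)) (pick (σ 3)))
    = (1/2) * ∑ σ : Equiv.Perm (Fin 4), ((Equiv.Perm.sign σ : ℤ) : ℝ) *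
      (YM (pick (σ 0)) * XM (pick (σ 1)) * DM (pick (σ 2)) (pick (σ 3)))
  rw [← sub_eq_zero, ← mul_sub, ← Finset.sum_sub_distrib]
  have hptw : ∀ σ ∈ (Finset.univ : Finset (Equiv.Perm (Fin 4))),
      ((Equiv.Perm.sign σ : ℤ) : ℝ) *
        (YP (pick (σ 0)) * XP (pick (σ 1)) * DP (pick (σ 2)) (pick (σ 3)))
      - ((Equiv.Perm.sign σ : ℤ) : ℝ) *
        (YM (pick (σ 0)) * XM (pick (σ 1)) * DM (pick (σ 2)) (pick (σ 3)))
      = α0 * (((Equiv.Perm.sign σ : ℤ) : ℝ) *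
          (YP (pick (σ 0)) * XP (pick (σ 1)) * N (pick (σ 2)) * XP (pick (σ 3))))
        + β0 * (((Equiv.Perm.sign σ : ℤ) : ℝ) *
          (YP (pick (σ 0)) * XP (pick (σ 1)) * N (pick (σ 2)) * YP (pick (σ 3))))
        - α0 * (((Equiv.Perm.sign σ : ℤ) : ℝ) *
          (YP (pick (σ 0)) * XP (pick (σ 1)) * XP (pick (σ 2)) * N (pick (σ 3))))
        - β0 * (((Equiv.Perm.sign σ : ℤ) : ℝ) *
          (YP (pick (σ 0)) * XP (pick (σ 1)) * YP (pick (σ 2)) * N (pick (σ 3)))) := by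
    intro σ _
    rw [← hXPM (pick (σ 1)), ← hYPM (pick (σ 0)), hD (pick (σ 2)) (pick (σ 3))]
    have e2 : K (pick (σ 2)) = α0 * XP (pick (σ 2)) + β0 * YP (pick (σ 2)) + γ0 * N (pick (σ 2)) := rfl
    have e3 : K (pick (σ 3)) = α0 * XP (pick (σ 3)) + β0 * YP (pick (σ 3)) + γ0 * N (pick (σ 3)) := rfl
    rw [e2, e3]
    ring
  rw [Finset.sum_congr rfl hptw]
  simp only [Finset.sum_add_distrib, Finset.sum_sub_distrib, ← Finset.mul_sum]
  rw [alt4_13 pick YP XP N, alt4_03 pick YP XP N, alt4_12 pick YP XP N,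
    alt4_02 pick YP XP N]
  ring

/-- relaxed sufficient condition: if the preliminary junction conditions
hold and the jumps `ℓ^α e_a^β [∇_α ξ_β]`, `ℓ^α e_a^β [∇_α η_β]`, `ξ^d [H_{bd}]` and
`η^d [H_{bd}]` all lie in the span of the lowered tangential components `ξ_a`, `η_a`,
then the restricted 4-forms `η∧ξ∧dξ` and `ξ∧η∧dη` agree on the matching hypersurface. -/
theorem four_forms_agree_relaxed {d : ℕ}
    (gp ginvp gm ginvm : Pt (d+1) → Fin (d+1) → Fin (d+1) → ℝ)
    (Φp Φm : Pt d → Pt (d+1)) (ℓp ℓm : Pt d → Pt (d+1))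
    (np nm : Pt d → Fin (d+1) → ℝ) (wp wm : Fin d → Pt d → Fin (d+1) → ℝ)
    (ξp ηp ξm ηm : Pt (d+1) → Pt (d+1)) (ξc ηc : Fin d → Pt d → ℝ)
    (f₁ f₂ f₃ f₄ A₁ A₂ B₁ B₂ : Pt d → ℝ)
    (hgp : ∀ a b, ContDiff ℝ (⊤ : ℕ∞) fun x => gp x a b)
    (hgm : ∀ a b, ContDiff ℝ (⊤ : ℕ∞) fun x => gm x a b)
    (hginvp : ∀ a b, ContDiff ℝ (⊤ : ℕ∞) fun x => ginvp x a b)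
    (hginvm : ∀ a b, ContDiff ℝ (⊤ : ℕ∞) fun x => ginvm x a b)
    (hgpsymm : ∀ x a b, gp x a b = gp x b a)
    (hgmsymm : ∀ x a b, gm x a b = gm x b a)
    (hinvp : ∀ x a b, (∑ c, ginvp x a c * gp x c b) = if a = b then (1:ℝ) else 0)
    (hinvm : ∀ x a b, (∑ c, ginvm x a c * gm x c b) = if a = b then (1:ℝ) else 0)
    (hΦp : ContDiff ℝ (⊤ : ℕ∞) Φp) (hΦpinj : Function.Injective Φp)
    (hΦpimm : ∀ p, Function.Injective (fderiv ℝ Φp p))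
    (hΦm : ContDiff ℝ (⊤ : ℕ∞) Φm) (hΦminj : Function.Injective Φm)
    (hΦmimm : ∀ p, Function.Injective (fderiv ℝ Φm p))
    (hℓp : ContDiff ℝ (⊤ : ℕ∞) ℓp) (hℓm : ContDiff ℝ (⊤ : ℕ∞) ℓm)
    (hξp : ContDiff ℝ (⊤ : ℕ∞) ξp) (hξm : ContDiff ℝ (⊤ : ℕ∞) ξm)
    (hηp : ContDiff ℝ (⊤ : ℕ∞) ηp) (hηm : ContDiff ℝ (⊤ : ℕ∞) ηm)
    -- preliminary junction conditions
    (hmatch : ∀ p a b, pull2 Φp gp p a b = pull2 Φm gm p a b)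
    -- duality of the coframes with the rigged frames on both sides
    (hnℓp : ∀ p, ip (np p) (ℓp p) = 1) (hnep : ∀ p a, ip (np p) (eF Φp a p) = 0)
    (hwℓp : ∀ p a, ip (wp a p) (ℓp p) = 0)
    (hwep : ∀ p a b, ip (wp a p) (eF Φp b p) = if a = b then (1:ℝ) else 0)
    (hnℓm : ∀ p, ip (nm p) (ℓm p) = 1) (hnem : ∀ p a, ip (nm p) (eF Φm a p) = 0)
    (hwℓm : ∀ p a, ip (wm a p) (ℓm p) = 0)
    (hwem : ∀ p a b, ip (wm a p) (eF Φm b p) = if a = b then (1:ℝ) else 0)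
    -- identification of the riggings
    (hℓnorm : ∀ p, gdot gp (Φp p) (ℓp p) (ℓp p) = gdot gm (Φm p) (ℓm p) (ℓm p))
    (hℓe : ∀ p a, gdot gp (Φp p) (ℓp p) (eF Φp a p) = gdot gm (Φm p) (ℓm p) (eF Φm a p))
    -- ξ^±, η^± are tangent to Σ^± with common frame components ξ^b, η^b
    (htanξp : ∀ p, ξp (Φp p) = ∑ b, ξc b p • eF Φp b p)
    (htanξm : ∀ p, ξm (Φm p) = ∑ b, ξc b p • eF Φm b p)
    (htanηp : ∀ p, ηp (Φp p) = ∑ b, ηc b p • eF Φp b p)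
    (htanηm : ∀ p, ηm (Φm p) = ∑ b, ηc b p • eF Φm b p)
    -- the jump ℓ^α e_a^β [∇_α ξ_β] lies in the span of ξ_a, η_a (+ its η analogue)
    (hjumpξ : ∀ p a,
      (∑ α, ∑ β, ℓp p α * eF Φp a p β * covD gp ginvp (flat gp ξp) (Φp p) α β)
        - (∑ α, ∑ β, ℓm p α * eF Φm a p β * covD gm ginvm (flat gm ξm) (Φm p) α β)
      = f₁ p * gdot gp (Φp p) (ξp (Φp p)) (eF Φp a p)
        + f₂ p * gdot gp (Φp p) (ηp (Φp p)) (eF Φp a p))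
    (hjumpη : ∀ p a,
      (∑ α, ∑ β, ℓp p α * eF Φp a p β * covD gp ginvp (flat gp ηp) (Φp p) α β)
        - (∑ α, ∑ β, ℓm p α * eF Φm a p β * covD gm ginvm (flat gm ηm) (Φm p) α β)
      = f₃ p * gdot gp (Φp p) (ηp (Φp p)) (eF Φp a p)
        + f₄ p * gdot gp (Φp p) (ξp (Φp p)) (eF Φp a p))
    -- the contracted jumps of the generalized second fundamental form lie in the same span
    (hHξ : ∀ p b,
      (∑ dd, ξc dd p * (Hgen gp ginvp Φp ℓp b dd p - Hgen gm ginvm Φm ℓm b dd p))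
      = A₁ p * gdot gp (Φp p) (ξp (Φp p)) (eF Φp b p)
        + A₂ p * gdot gp (Φp p) (ηp (Φp p)) (eF Φp b p))
    (hHη : ∀ p b,
      (∑ dd, ηc dd p * (Hgen gp ginvp Φp ℓp b dd p - Hgen gm ginvm Φm ℓm b dd p))
      = B₁ p * gdot gp (Φp p) (ξp (Φp p)) (eF Φp b p)
        + B₂ p * gdot gp (Φp p) (ηp (Φp p)) (eF Φp b p)) :
    ∀ p (pick : Fin 4 → Option (Fin d)),
      form4 gp ηp ξp (Φp p) (fun i => frameV Φp ℓp p (pick i))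
        = form4 gm ηm ξm (Φm p) (fun i => frameV Φm ℓm p (pick i))
      ∧
      form4 gp ξp ηp (Φp p) (fun i => frameV Φp ℓp p (pick i))
        = form4 gm ξm ηm (Φm p) (fun i => frameV Φm ℓm p (pick i)) := by
  intro p pick
  constructor
  · exact jump_form4 gp ginvp gm ginvm Φp Φm ℓp ℓm ξp ηp ξm ηm ξc ηc f₁ f₂ A₁ A₂
      hgp hgm hgpsymm hgmsymm hinvp hinvm hΦp hΦm hℓp hℓm hξp hξm hηp hηm
      hmatch hℓe htanξp htanξm htanηp htanηm hjumpξ hHξ p pick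
  · exact jump_form4 gp ginvp gm ginvm Φp Φm ℓp ℓm ηp ξp ηm ξm ηc ξc f₃ f₄ B₂ B₁
      hgp hgm hgpsymm hgmsymm hinvp hinvm hΦp hΦm hℓp hℓm hηp hηm hξp hξm
      hmatch hℓe htanηp htanηm htanξp htanξm hjumpη
      (fun q b => (hHη q b).trans (by ring)) p pick
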